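/- (Dissipation of the total storage along the closed loop) Let n ≥ 1, let G and G^{com} be simple graphs on {1,…,n} with neighbor sets N_i and N_i^{com}, and write (Lx)_i = Σ_{j∈N_i^{com}}(x_i − x_j). Suppose X_{di} > X'_{di}, B_{ij} = B_{ji} < 0 for i ≠ j adjacent in G (B_{ij}=0 otherwise), B_{ii} = Σ_{j∈N_i}B_{ij}, and T_{pi}, K_{pi}, T_{Vi}, T_{ti}, T_{θi}, Q_i, M_{1i}, M_{3i} > 0, M_{2i} ≥ 0, M_{4i} = −(M_{2i}+M_{3i}), R_i, Ē_{fi}, P_{di} ∈ ℝ for all i. Let δ, f, V, P, θ : I → ℝ^n be differentiable on an open interval I, satisfying for all t, i: δ̇_i = f_i; T_{pi}ḟ_i = −f_i + K_{pi}(P_i − P_{di} + Σ_{j∈N_i}V_iV_jB_{ij}sin(δ_i − δ_j)); T_{Vi}V̇_i = Ē_{fi} − (1 − (X_{di}−X'_{di})B_{ii})V_i − (X_{di}−X'_{di})Σ_{j∈N_i}V_jB_{ij}cos(δ_i − δ_j); M_{3i}T_{ti}Ṗ_i = −(M_{2i}+M_{3i})P_i − M_{4i}θ_i − M_{1i}f_i;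 T_{θi}θ̇_i = −θ_i + P_i − (M_{1i}Q_i/(M_{2i}+M_{3i}))(L(Qθ+R))_i. Let δ̄, V̄, P̄, θ̄ ∈ ℝ^n be constants with f̄ = 0, P̄ = θ̄, satisfying for all i: 0 = P̄_i − P_{di} + Σ_{j∈N_i}V̄_iV̄_jB_{ij}sin(δ̄_i − δ̄_j); 0 = Ē_{fi} − (1 − (X_{di}−X'_{di})B_{ii})V̄_i − (X_{di}−X'_{di})Σ_{j∈N_i}V̄_jB_{ij}cos(δ̄_i − δ̄_j); (L(Qθ̄+R))_i = 0. Then t ↦ 𝒮₁(δ(t),f(t),V(t)) + S₂(t) is differentiable on I with derivative −Σ_i f_i²/K_{pi} − Σ_i(T_{Vi}/(X_{di}−X'_{di}))V̇_i² − Σ_i((M_{2i}+M_{3i})/M_{1i})(P_i−θ_i)² − Σ_{{i,j}∈E(G^{com})}(Q_i(θ_i−θ̄_i) − Q_j(θ_j−θ̄_j))², which is ≤ 0 for all t ∈ I. -/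

import Mathlib

open Finset

/-- The matrix `E(δ)`: `E i i = 1/(Xd i - Xd' i) - B i i`,
`E i j = B i j * cos (δ i - δ j)` for `i ≠ j` (which is `0` for non-adjacent pairs,
since there `B i j = 0`). -/
noncomputable def Emat (n : ℕ) (B : Fin n → Fin n → ℝ) (Xd Xd' : Fin n → ℝ)
    (δ : Fin n → ℝ) (i j : Fin n) : ℝ :=
  if i = j then 1 / (Xd i - Xd' i) - B i i else B i j * Real.cos (δ i - δ j)

/-- The incremental storage function `𝒮₁(δ, f, V)` at the reference point `(δ̄, f̄, V̄)`.
The sum over the unordered edges `{i,j} ∈ E(G)` (each edge counted once) is written as half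
the double sum over ordered adjacent pairs, the summand being symmetric in `i` and `j`
when `B` is symmetric. -/
noncomputable def storage1 (n : ℕ) (G : SimpleGraph (Fin n)) [DecidableRel G.Adj]
    (B : Fin n → Fin n → ℝ) (Xd Xd' Tp Kp : Fin n → ℝ)
    (δbar fbar Vbar δ f V : Fin n → ℝ) : ℝ :=
  (1 / 2) * ∑ i, (Tp i / Kp i) * (f i - fbar i) ^ 2
    + (1 / 2) * ∑ i, ∑ j, V i * Emat n B Xd Xd' δ i j * V j
    - (1 / 2) * ∑ i, ∑ j, Vbar i * Emat n B Xd Xd' δbar i j * Vbar j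
    - ∑ i, (∑ j, Emat n B Xd Xd' δbar i j * Vbar j) * (V i - Vbar i)
    + (1 / 2) * ∑ i, ∑ j ∈ G.neighborFinset i,
        B i j * Vbar i * Vbar j * Real.sin (δbar i - δbar j) *
          ((δ i - δ j) - (δbar i - δbar j))

/-!
The network storage `𝒮₁` is a storage function with supply rate `∑ i, f i (P i - P̄ i)`:
its derivative along the flux-decay model is `-∑ f²/Kp - ∑ (TV/(Xd - Xd')) V̇²` plus that supply.
Here the `cos (δ i - δ j)` entries of `E(δ)` contribute the electrical power `∑ V V B sin`, the
voltage equation identifies `E(δ) V - E(δ̄) V̄` with `-(TV/(Xd - Xd')) V̇`, and the steady-state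
power balance turns the linear term into `∑ f (Pd - P̄)`. The turbine/controller storage `S₂` has
the opposite supply rate; after subtracting the steady-state consensus, its controller term is the
Laplacian quadratic form of `Q (θ - θ̄)` on `Gc`. The supplies cancel in the sum.
-/

namespace SimpleGraph

variable {V R : Type*} [Fintype V] [CommRing R] (G : SimpleGraph V) [DecidableRel G.Adj]

theorem sum_sum_neighborFinset_eq_sum_sum_ite (g : V → V → R) :
    ∑ i, ∑ j ∈ G.neighborFinset i, g i j = ∑ i, ∑ j, if G.Adj i j then g i j else 0 := by
  simp only [neighborFinset_eq_filter, sum_filter]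

theorem sum_sum_neighborFinset_comm (g : V → V → R) :
    ∑ i, ∑ j ∈ G.neighborFinset i, g i j = ∑ i, ∑ j ∈ G.neighborFinset i, g j i := by
  rw [sum_sum_neighborFinset_eq_sum_sum_ite, sum_sum_neighborFinset_eq_sum_sum_ite, sum_comm]
  simp only [G.adj_comm]

theorem sum_sum_neighborFinset_mul_sub_of_antisymm {c : V → V → R}
    (hc : ∀ i j, G.Adj i j → c j i = -c i j) (w : V → R) :
    ∑ i, ∑ j ∈ G.neighborFinset i, c i j * (w i - w j)
      = 2 * ∑ i, w i * ∑ j ∈ G.neighborFinset i, c i j := by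
  have hswap : ∑ i, ∑ j ∈ G.neighborFinset i, c i j * w j
      = -∑ i, ∑ j ∈ G.neighborFinset i, c i j * w i := by
    rw [G.sum_sum_neighborFinset_comm, ← sum_neg_distrib]
    refine sum_congr rfl fun i _ => ?_
    rw [← sum_neg_distrib]
    refine sum_congr rfl fun j hj => ?_
    rw [hc i j ((G.mem_neighborFinset i j).1 hj), neg_mul]
  simp only [mul_sub, sum_sub_distrib, hswap, sub_neg_eq_add, ← two_mul]
  congr 1
  exact sum_congr rfl fun i _ => by rw [mul_sum]; exact sum_congr rfl fun j _ => mul_comm _ _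

theorem sum_sum_neighborFinset_sub_sq (y : V → R) :
    ∑ i, ∑ j ∈ G.neighborFinset i, (y i - y j) ^ 2
      = 2 * ∑ i, y i * ∑ j ∈ G.neighborFinset i, (y i - y j) := by
  simp only [sq]
  exact G.sum_sum_neighborFinset_mul_sub_of_antisymm (fun _ _ _ => by ring) y

end SimpleGraph

theorem hasDerivAt_half_sum_mul_sub_sq {ι : Type*} [Fintype ι] {x : ℝ → ι → ℝ} {x' : ι → ℝ}
    {t : ℝ} (c xbar : ι → ℝ) (hx : ∀ i, HasDerivAt (fun s => x s i) (x' i) t) :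
    HasDerivAt (fun s => (1 / 2) * ∑ i, c i * (x s i - xbar i) ^ 2)
      (∑ i, c i * (x t i - xbar i) * x' i) t := by
  refine (HasDerivAt.fun_sum fun i _ =>
    (((hx i).sub_const (xbar i)).fun_pow 2).const_mul (c i)).const_mul (1 / 2) |>.congr_deriv ?_
  rw [mul_sum]
  refine sum_congr rfl fun i _ => ?_
  simp only [Nat.cast_ofNat, Nat.add_one_sub_one, pow_one]
  ring

section Emat

variable {n : ℕ} {G : SimpleGraph (Fin n)} [DecidableRel G.Adj] {B : Fin n → Fin n → ℝ}
  {Xd Xd' : Fin n → ℝ}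

theorem Emat_eq_ite_add_ite (hBzero : ∀ i j, i ≠ j → ¬ G.Adj i j → B i j = 0)
    (δ : Fin n → ℝ) (i j : Fin n) :
    Emat n B Xd Xd' δ i j = (if i = j then 1 / (Xd i - Xd' i) - B i i else 0)
      + if G.Adj i j then B i j * Real.cos (δ i - δ j) else 0 := by
  unfold Emat
  by_cases hij : i = j
  · subst hij
    simp
  · by_cases hadj : G.Adj i j
    · simp [hij, hadj]
    · simp [hij, hadj, hBzero i j hij hadj]

theorem Emat_symm (hBsym : ∀ i j, G.Adj i j → B i j = B j i)
    (hBzero : ∀ i j, i ≠ j → ¬ G.Adj i j → B i j = 0) (δ : Fin n → ℝ) (i j : Fin n) :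
    Emat n B Xd Xd' δ i j = Emat n B Xd Xd' δ j i := by
  unfold Emat
  by_cases hij : i = j
  · subst hij
    rfl
  rw [if_neg hij, if_neg (Ne.symm hij), ← Real.cos_neg, neg_sub]
  by_cases hadj : G.Adj i j
  · rw [hBsym i j hadj]
  · rw [hBzero i j hij hadj, hBzero j i (Ne.symm hij) (fun h => hadj h.symm)]

theorem mul_sum_Emat_mul (hBzero : ∀ i j, i ≠ j → ¬ G.Adj i j → B i j = 0)
    (hX : ∀ i, Xd i - Xd' i ≠ 0) (δ W : Fin n → ℝ) (i : Fin n) :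
    (Xd i - Xd' i) * ∑ j, Emat n B Xd Xd' δ i j * W j
      = (1 - (Xd i - Xd' i) * B i i) * W i
        + (Xd i - Xd' i) * ∑ j ∈ G.neighborFinset i, W j * B i j * Real.cos (δ i - δ j) := by
  have hrow : ∑ j, Emat n B Xd Xd' δ i j * W j = (1 / (Xd i - Xd' i) - B i i) * W i
      + ∑ j ∈ G.neighborFinset i, W j * B i j * Real.cos (δ i - δ j) := by
    simp only [Emat_eq_ite_add_ite hBzero, add_mul, ite_mul, zero_mul, sum_add_distrib,
      sum_ite_eq, mem_univ, if_true, SimpleGraph.neighborFinset_eq_filter, sum_filter]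
    exact congrArg _ (sum_congr rfl fun j _ => by split_ifs <;> ring)
  rw [hrow]
  field_simp [hX i]

theorem hasDerivAt_Emat (hBzero : ∀ i j, i ≠ j → ¬ G.Adj i j → B i j = 0)
    {δ : ℝ → Fin n → ℝ} {f : Fin n → ℝ} {t : ℝ} (hδ : ∀ i, HasDerivAt (fun s => δ s i) (f i) t)
    (i j : Fin n) :
    HasDerivAt (fun s => Emat n B Xd Xd' (δ s) i j)
      (if G.Adj i j then -(B i j * Real.sin (δ t i - δ t j) * (f i - f j)) else 0) t := by
  simp only [Emat_eq_ite_add_ite hBzero]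
  by_cases hadj : G.Adj i j
  · simp only [hadj, if_true]
    exact (((hδ i).fun_sub (hδ j)).cos.const_mul (B i j)).const_add _ |>.congr_deriv (by ring)
  · simp only [hadj, if_false, add_zero]
    exact hasDerivAt_const _ _

theorem hasDerivAt_sum_sum_mul_Emat_mul (hBsym : ∀ i j, G.Adj i j → B i j = B j i)
    (hBzero : ∀ i j, i ≠ j → ¬ G.Adj i j → B i j = 0) {δ V : ℝ → Fin n → ℝ} {f V' : Fin n → ℝ}
    {t : ℝ} (hδ : ∀ i, HasDerivAt (fun s => δ s i) (f i) t)
    (hV : ∀ i, HasDerivAt (fun s => V s i) (V' i) t) :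
    HasDerivAt (fun s => ∑ i, ∑ j, V s i * Emat n B Xd Xd' (δ s) i j * V s j)
      (2 * ∑ i, V' i * ∑ j, Emat n B Xd Xd' (δ t) i j * V t j
        - 2 * ∑ i, f i * ∑ j ∈ G.neighborFinset i,
            V t i * V t j * B i j * Real.sin (δ t i - δ t j)) t := by
  refine (HasDerivAt.fun_sum fun i _ => HasDerivAt.fun_sum fun j _ =>
    ((hV i).fun_mul (hasDerivAt_Emat hBzero hδ i j)).fun_mul (hV j)).congr_deriv ?_
  have hsymm : ∑ i, ∑ j, V t i * Emat n B Xd Xd' (δ t) i j * V' j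
      = ∑ i, V' i * ∑ j, Emat n B Xd Xd' (δ t) i j * V t j := by
    rw [sum_comm]
    refine sum_congr rfl fun i _ => ?_
    rw [mul_sum]
    exact sum_congr rfl fun j _ => by rw [Emat_symm hBsym hBzero]; ring
  have hsin : ∑ i, ∑ j, V t i *
        (if G.Adj i j then -(B i j * Real.sin (δ t i - δ t j) * (f i - f j)) else 0) * V t j
      = -(2 * ∑ i, f i * ∑ j ∈ G.neighborFinset i,
            V t i * V t j * B i j * Real.sin (δ t i - δ t j)) := by
    simp only [mul_ite, ite_mul, mul_zero, zero_mul]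
    have hanti : ∀ i j, G.Adj i j → -(V t j * V t i * B j i * Real.sin (δ t j - δ t i))
        = -(-(V t i * V t j * B i j * Real.sin (δ t i - δ t j))) := by
      intro i j hij
      rw [← hBsym i j hij, ← neg_sub, Real.sin_neg]
      ring
    rw [← G.sum_sum_neighborFinset_eq_sum_sum_ite,
      sum_congr rfl fun i _ => sum_congr rfl fun j _ => show
        V t i * -(B i j * Real.sin (δ t i - δ t j) * (f i - f j)) * V t j
          = -(V t i * V t j * B i j * Real.sin (δ t i - δ t j)) * (f i - f j) by ring,
      G.sum_sum_neighborFinset_mul_sub_of_antisymm hanti]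
    simp only [sum_neg_distrib, mul_neg]
  have hrow : ∑ i, ∑ j, V' i * Emat n B Xd Xd' (δ t) i j * V t j
      = ∑ i, V' i * ∑ j, Emat n B Xd Xd' (δ t) i j * V t j :=
    sum_congr rfl fun i _ => by rw [mul_sum]; exact sum_congr rfl fun j _ => by ring
  simp only [add_mul, sum_add_distrib, hrow, hsymm, hsin]
  ring

theorem hasDerivAt_storage1 (hBsym : ∀ i j, G.Adj i j → B i j = B j i)
    (hBzero : ∀ i j, i ≠ j → ¬ G.Adj i j → B i j = 0) (Tp Kp δbar fbar Vbar : Fin n → ℝ)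
    {δ f V : ℝ → Fin n → ℝ} {f' V' : Fin n → ℝ} {t : ℝ}
    (hδ : ∀ i, HasDerivAt (fun s => δ s i) (f t i) t)
    (hf : ∀ i, HasDerivAt (fun s => f s i) (f' i) t)
    (hV : ∀ i, HasDerivAt (fun s => V s i) (V' i) t) :
    HasDerivAt (fun s => storage1 n G B Xd Xd' Tp Kp δbar fbar Vbar (δ s) (f s) (V s))
      (∑ i, Tp i / Kp i * (f t i - fbar i) * f' i
        + ∑ i, V' i * (∑ j, Emat n B Xd Xd' (δ t) i j * V t j
            - ∑ j, Emat n B Xd Xd' δbar i j * Vbar j)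
        - ∑ i, f t i * ∑ j ∈ G.neighborFinset i,
            V t i * V t j * B i j * Real.sin (δ t i - δ t j)
        + ∑ i, f t i * ∑ j ∈ G.neighborFinset i,
            B i j * Vbar i * Vbar j * Real.sin (δbar i - δbar j)) t := by
  have hkin := hasDerivAt_half_sum_mul_sub_sq (fun i => Tp i / Kp i) fbar hf
  have hquad := (hasDerivAt_sum_sum_mul_Emat_mul (Xd := Xd) (Xd' := Xd') hBsym hBzero hδ hV).const_mul (1 / 2 : ℝ)
  have hlin := HasDerivAt.fun_sum (u := univ) fun i _ =>
    ((hV i).sub_const (Vbar i)).const_mul (∑ j, Emat n B Xd Xd' δbar i j * Vbar j)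
  have hang := (HasDerivAt.fun_sum (u := univ) fun i _ => HasDerivAt.fun_sum
    (u := G.neighborFinset i) fun j _ => (((hδ i).fun_sub (hδ j)).sub_const
      (δbar i - δbar j)).const_mul (B i j * Vbar i * Vbar j * Real.sin (δbar i - δbar j))).const_mul (1 / 2 : ℝ)
  have hanti : ∀ i j, G.Adj i j → B j i * Vbar j * Vbar i * Real.sin (δbar j - δbar i)
      = -(B i j * Vbar i * Vbar j * Real.sin (δbar i - δbar j)) := by
    intro i j hij
    rw [← hBsym i j hij, ← neg_sub, Real.sin_neg]
    ring
  refine ((((hkin.add hquad).sub_const _).sub hlin).add hang).congr_deriv ?_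
  rw [G.sum_sum_neighborFinset_mul_sub_of_antisymm hanti, sum_congr rfl fun i _ =>
    mul_comm (∑ j, Emat n B Xd Xd' δbar i j * Vbar j) (V' i)]
  simp only [mul_sub, sum_sub_distrib]
  ring

theorem hasDerivAt_storage1_of_network_ode (hX : ∀ i, Xd i - Xd' i ≠ 0)
    (hBsym : ∀ i j, G.Adj i j → B i j = B j i)
    (hBzero : ∀ i j, i ≠ j → ¬ G.Adj i j → B i j = 0) {Tp Kp TV Ef Pd : Fin n → ℝ}
    (hKp : ∀ i, Kp i ≠ 0) {δbar Vbar Pbar : Fin n → ℝ} {δ f V : ℝ → Fin n → ℝ}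
    {f' V' P : Fin n → ℝ} {t : ℝ}
    (hδ : ∀ i, HasDerivAt (fun s => δ s i) (f t i) t)
    (hf : ∀ i, HasDerivAt (fun s => f s i) (f' i) t)
    (hV : ∀ i, HasDerivAt (fun s => V s i) (V' i) t)
    (hfode : ∀ i, Tp i * f' i = -f t i + Kp i * (P i - Pd i +
        ∑ j ∈ G.neighborFinset i, V t i * V t j * B i j * Real.sin (δ t i - δ t j)))
    (hVode : ∀ i, TV i * V' i = Ef i - (1 - (Xd i - Xd' i) * B i i) * V t i -
        (Xd i - Xd' i) * ∑ j ∈ G.neighborFinset i, V t j * B i j * Real.cos (δ t i - δ t j))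
    (hss1 : ∀ i, 0 = Pbar i - Pd i +
      ∑ j ∈ G.neighborFinset i, Vbar i * Vbar j * B i j * Real.sin (δbar i - δbar j))
    (hss2 : ∀ i, 0 = Ef i - (1 - (Xd i - Xd' i) * B i i) * Vbar i -
      (Xd i - Xd' i) * ∑ j ∈ G.neighborFinset i, Vbar j * B i j * Real.cos (δbar i - δbar j)) :
    HasDerivAt (fun s => storage1 n G B Xd Xd' Tp Kp δbar (fun _ => 0) Vbar (δ s) (f s) (V s))
      (-∑ i, f t i ^ 2 / Kp i - ∑ i, TV i / (Xd i - Xd' i) * V' i ^ 2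
        + ∑ i, f t i * (P i - Pbar i)) t := by
  have hkin : ∀ i, Tp i / Kp i * (f t i - 0) * f' i = -(f t i ^ 2 / Kp i) + f t i * (P i - Pd i)
      + f t i * ∑ j ∈ G.neighborFinset i, V t i * V t j * B i j * Real.sin (δ t i - δ t j) := by
    intro i
    field_simp [hKp i]
    linear_combination f t i * hfode i
  have hvolt : ∀ i, V' i * (∑ j, Emat n B Xd Xd' (δ t) i j * V t j
      - ∑ j, Emat n B Xd Xd' δbar i j * Vbar j) = -(TV i / (Xd i - Xd' i) * V' i ^ 2) := by
    intro i
    have hrow := mul_sum_Emat_mul hBzero hX (δ t) (V t) i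
    have hrowbar := mul_sum_Emat_mul hBzero hX δbar Vbar i
    field_simp [hX i]
    linear_combination V' i * (hrow - hrowbar + hVode i - hss2 i)
  have hload : ∀ i, ∑ j ∈ G.neighborFinset i, B i j * Vbar i * Vbar j * Real.sin (δbar i - δbar j)
      = Pd i - Pbar i := by
    intro i
    calc _ = ∑ j ∈ G.neighborFinset i, Vbar i * Vbar j * B i j * Real.sin (δbar i - δbar j) :=
          sum_congr rfl fun j _ => by ring
      _ = Pd i - Pbar i := by linear_combination -hss1 i
  refine (hasDerivAt_storage1 hBsym hBzero Tp Kp δbar _ Vbar hδ hf hV).congr_deriv ?_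
  simp only [hkin, hvolt, hload, sum_add_distrib, sum_neg_distrib]
  simp only [mul_sub, sum_sub_distrib]
  ring

end Emat

theorem hasDerivAt_turbine_storage {n : ℕ} {Gc : SimpleGraph (Fin n)} [DecidableRel Gc.Adj]
    {Tt Tθ Q M1 M2 M3 M4 R : Fin n → ℝ} (hM1 : ∀ i, M1 i ≠ 0) (hM23 : ∀ i, M2 i + M3 i ≠ 0)
    (hM4 : ∀ i, M4 i = -(M2 i + M3 i)) {θbar f P' θ' : Fin n → ℝ} {P θ : ℝ → Fin n → ℝ}
    {t : ℝ} (hP : ∀ i, HasDerivAt (fun s => P s i) (P' i) t)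
    (hθ : ∀ i, HasDerivAt (fun s => θ s i) (θ' i) t)
    (hPode : ∀ i, M3 i * Tt i * P' i = -(M2 i + M3 i) * P t i - M4 i * θ t i - M1 i * f i)
    (hθode : ∀ i, Tθ i * θ' i = -θ t i + P t i - (M1 i * Q i / (M2 i + M3 i)) *
        ∑ j ∈ Gc.neighborFinset i, ((Q i * θ t i + R i) - (Q j * θ t j + R j)))
    (hss3 : ∀ i, ∑ j ∈ Gc.neighborFinset i,
      ((Q i * θbar i + R i) - (Q j * θbar j + R j)) = 0) :
    HasDerivAt (fun s => (1 / 2) * ∑ i, (M3 i * Tt i / M1 i) * (P s i - θbar i) ^ 2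
        + (1 / 2) * ∑ i, ((M2 i + M3 i) * Tθ i / M1 i) * (θ s i - θbar i) ^ 2)
      (-∑ i, ((M2 i + M3 i) / M1 i) * (P t i - θ t i) ^ 2
        - (1 / 2) * ∑ i, ∑ j ∈ Gc.neighborFinset i,
            (Q i * (θ t i - θbar i) - Q j * (θ t j - θbar j)) ^ 2
        - ∑ i, f i * (P t i - θbar i)) t := by
  have hcons : ∀ i, ∑ j ∈ Gc.neighborFinset i, ((Q i * θ t i + R i) - (Q j * θ t j + R j))
      = ∑ j ∈ Gc.neighborFinset i, (Q i * (θ t i - θbar i) - Q j * (θ t j - θbar j)) := by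
    intro i
    rw [← sub_zero (∑ j ∈ Gc.neighborFinset i, _), ← hss3 i, ← sum_sub_distrib]
    exact sum_congr rfl fun j _ => by ring
  have hnode : ∀ i, M3 i * Tt i / M1 i * (P t i - θbar i) * P' i
        + (M2 i + M3 i) * Tθ i / M1 i * (θ t i - θbar i) * θ' i
      = -((M2 i + M3 i) / M1 i * (P t i - θ t i) ^ 2) - f i * (P t i - θbar i)
        - Q i * (θ t i - θbar i) * ∑ j ∈ Gc.neighborFinset i,
            (Q i * (θ t i - θbar i) - Q j * (θ t j - θbar j)) := by
    intro i
    have hθi : (M2 i + M3 i) * (Tθ i * θ' i) = (M2 i + M3 i) * (P t i - θ t i) - M1 i * Q i *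
        ∑ j ∈ Gc.neighborFinset i, (Q i * (θ t i - θbar i) - Q j * (θ t j - θbar j)) := by
      rw [hθode i, hcons i]
      field_simp [hM23 i]
      ring
    have hPi : M3 i * Tt i * P' i = -(M2 i + M3 i) * (P t i - θ t i) - M1 i * f i := by
      rw [hPode i, hM4 i]
      ring
    generalize ∑ j ∈ Gc.neighborFinset i, (Q i * (θ t i - θbar i) - Q j * (θ t j - θbar j)) = L
      at hθi ⊢
    field_simp [hM1 i]
    linear_combination (P t i - θbar i) * hPi + (θ t i - θbar i) * hθi
  refine ((hasDerivAt_half_sum_mul_sub_sq _ θbar hP).add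
    (hasDerivAt_half_sum_mul_sub_sq _ θbar hθ)).congr_deriv ?_
  rw [← sum_add_distrib, sum_congr rfl fun i _ => hnode i,
    Gc.sum_sum_neighborFinset_sub_sq fun i => Q i * (θ t i - θbar i)]
  simp only [sum_sub_distrib, sum_neg_distrib]
  ring

theorem stmt11_general (n : ℕ)
    (G Gc : SimpleGraph (Fin n)) [DecidableRel G.Adj] [DecidableRel Gc.Adj]
    (Xd Xd' : Fin n → ℝ) (hX : ∀ i, Xd' i < Xd i)
    (B : Fin n → Fin n → ℝ)
    (hBsym : ∀ i j, G.Adj i j → B i j = B j i)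
    (hBzero : ∀ i j, i ≠ j → ¬ G.Adj i j → B i j = 0)
    (Tp Kp TV Tt Tθ Q M1 M2 M3 M4 R Ef Pd : Fin n → ℝ)
    (hKp : ∀ i, 0 < Kp i) (hTV : ∀ i, 0 < TV i)
    (hM1 : ∀ i, 0 < M1 i) (hM2 : ∀ i, 0 ≤ M2 i) (hM3 : ∀ i, 0 < M3 i)
    (hM4 : ∀ i, M4 i = -(M2 i + M3 i))
    (a b : ℝ)
    (δ f V P θ f' V' P' θ' : ℝ → Fin n → ℝ)
    (hδ : ∀ t ∈ Set.Ioo a b, ∀ i, HasDerivAt (fun s => δ s i) (f t i) t)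
    (hf : ∀ t ∈ Set.Ioo a b, ∀ i, HasDerivAt (fun s => f s i) (f' t i) t)
    (hV : ∀ t ∈ Set.Ioo a b, ∀ i, HasDerivAt (fun s => V s i) (V' t i) t)
    (hP : ∀ t ∈ Set.Ioo a b, ∀ i, HasDerivAt (fun s => P s i) (P' t i) t)
    (hθ : ∀ t ∈ Set.Ioo a b, ∀ i, HasDerivAt (fun s => θ s i) (θ' t i) t)
    (hfode : ∀ t ∈ Set.Ioo a b, ∀ i, Tp i * f' t i =
      -f t i + Kp i * (P t i - Pd i +
        ∑ j ∈ G.neighborFinset i, V t i * V t j * B i j * Real.sin (δ t i - δ t j)))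
    (hVode : ∀ t ∈ Set.Ioo a b, ∀ i, TV i * V' t i =
      Ef i - (1 - (Xd i - Xd' i) * B i i) * V t i -
        (Xd i - Xd' i) * ∑ j ∈ G.neighborFinset i, V t j * B i j * Real.cos (δ t i - δ t j))
    (hPode : ∀ t ∈ Set.Ioo a b, ∀ i, M3 i * Tt i * P' t i =
      -(M2 i + M3 i) * P t i - M4 i * θ t i - M1 i * f t i)
    (hθode : ∀ t ∈ Set.Ioo a b, ∀ i, Tθ i * θ' t i =
      -θ t i + P t i - (M1 i * Q i / (M2 i + M3 i)) *
        ∑ j ∈ Gc.neighborFinset i, ((Q i * θ t i + R i) - (Q j * θ t j + R j)))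
    (δbar Vbar Pbar θbar : Fin n → ℝ)
    (hPbareq : ∀ i, Pbar i = θbar i)
    (hss1 : ∀ i, 0 = Pbar i - Pd i +
      ∑ j ∈ G.neighborFinset i, Vbar i * Vbar j * B i j * Real.sin (δbar i - δbar j))
    (hss2 : ∀ i, 0 = Ef i - (1 - (Xd i - Xd' i) * B i i) * Vbar i -
      (Xd i - Xd' i) * ∑ j ∈ G.neighborFinset i,
        Vbar j * B i j * Real.cos (δbar i - δbar j))
    (hss3 : ∀ i, ∑ j ∈ Gc.neighborFinset i,
      ((Q i * θbar i + R i) - (Q j * θbar j + R j)) = 0) :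
    ∀ t ∈ Set.Ioo a b,
      HasDerivAt
        (fun s => storage1 n G B Xd Xd' Tp Kp δbar (fun _ => 0) Vbar (δ s) (f s) (V s)
          + ((1 / 2) * ∑ i, (M3 i * Tt i / M1 i) * (P s i - Pbar i) ^ 2
            + (1 / 2) * ∑ i, ((M2 i + M3 i) * Tθ i / M1 i) * (θ s i - θbar i) ^ 2))
        (-∑ i, (f t i) ^ 2 / Kp i
          - ∑ i, (TV i / (Xd i - Xd' i)) * (V' t i) ^ 2
          - ∑ i, ((M2 i + M3 i) / M1 i) * (P t i - θ t i) ^ 2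
          - (1 / 2) * ∑ i, ∑ j ∈ Gc.neighborFinset i,
              (Q i * (θ t i - θbar i) - Q j * (θ t j - θbar j)) ^ 2) t ∧
      (-∑ i, (f t i) ^ 2 / Kp i
          - ∑ i, (TV i / (Xd i - Xd' i)) * (V' t i) ^ 2
          - ∑ i, ((M2 i + M3 i) / M1 i) * (P t i - θ t i) ^ 2
          - (1 / 2) * ∑ i, ∑ j ∈ Gc.neighborFinset i,
              (Q i * (θ t i - θbar i) - Q j * (θ t j - θbar j)) ^ 2) ≤ 0 := by
  intro t ht
  obtain rfl : Pbar = θbar := funext hPbareq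
  have hΔ : ∀ i, 0 < Xd i - Xd' i := fun i => sub_pos.2 (hX i)
  have hM23 : ∀ i, 0 < M2 i + M3 i := fun i => add_pos_of_nonneg_of_pos (hM2 i) (hM3 i)
  have hnet := hasDerivAt_storage1_of_network_ode (fun i => (hΔ i).ne') hBsym hBzero
    (fun i => (hKp i).ne') (hδ t ht) (hf t ht) (hV t ht) (hfode t ht) (hVode t ht) hss1 hss2
  have hturb := hasDerivAt_turbine_storage (fun i => (hM1 i).ne') (fun i => (hM23 i).ne') hM4
    (hP t ht) (hθ t ht) (hPode t ht) (hθode t ht) hss3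
  refine ⟨(hnet.add hturb).congr_deriv (by ring), ?_⟩
  have hfreq : 0 ≤ ∑ i, f t i ^ 2 / Kp i :=
    sum_nonneg fun i _ => div_nonneg (sq_nonneg _) (hKp i).le
  have hvolt : 0 ≤ ∑ i, TV i / (Xd i - Xd' i) * V' t i ^ 2 :=
    sum_nonneg fun i _ => mul_nonneg (div_nonneg (hTV i).le (hΔ i).le) (sq_nonneg _)
  have hturbine : 0 ≤ ∑ i, (M2 i + M3 i) / M1 i * (P t i - θ t i) ^ 2 :=
    sum_nonneg fun i _ => mul_nonneg (div_nonneg (hM23 i).le (hM1 i).le) (sq_nonneg _)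
  have hcons : 0 ≤ ∑ i, ∑ j ∈ Gc.neighborFinset i,
      (Q i * (θ t i - Pbar i) - Q j * (θ t j - Pbar j)) ^ 2 :=
    sum_nonneg fun i _ => sum_nonneg fun j _ => sq_nonneg _
  linarith

/-- Dissipation of the total storage along the closed loop: along solutions of
the flux-decay power network model interconnected with the turbine dynamics reduced to the
sliding manifold and the distributed consensus controller on the communication graph `Gc`,
and with respect to a closed-loop steady state `(δ̄, f̄ = 0, V̄, P̄ = θ̄, θ̄)`, the total
storage `𝒮₁ + S₂` is differentiable with nonpositive derivative
`-∑ i f i²/Kp i - ∑ i (TV i/(Xd i - Xd' i)) V̇ i² - ∑ i ((M2 i + M3 i)/M1 i)(P i - θ i)²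
 - ∑_{edges {i,j} of Gc} (Q i (θ i - θ̄ i) - Q j (θ j - θ̄ j))²`;
the sum over unordered edges (each counted once) is written as half the double sum over
ordered adjacent pairs, the summand being symmetric. -/
theorem stmt11 (n : ℕ) (hn : 1 ≤ n)
    (G Gc : SimpleGraph (Fin n)) [DecidableRel G.Adj] [DecidableRel Gc.Adj]
    (Xd Xd' : Fin n → ℝ) (hX : ∀ i, Xd' i < Xd i)
    (B : Fin n → Fin n → ℝ)
    (hBsym : ∀ i j, G.Adj i j → B i j = B j i)
    (hBneg : ∀ i j, G.Adj i j → B i j < 0)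
    (hBzero : ∀ i j, i ≠ j → ¬ G.Adj i j → B i j = 0)
    (hBii : ∀ i, B i i = ∑ j ∈ G.neighborFinset i, B i j)
    (Tp Kp TV Tt Tθ Q M1 M2 M3 M4 R Ef Pd : Fin n → ℝ)
    (hTp : ∀ i, 0 < Tp i) (hKp : ∀ i, 0 < Kp i) (hTV : ∀ i, 0 < TV i)
    (hTt : ∀ i, 0 < Tt i) (hTθ : ∀ i, 0 < Tθ i) (hQ : ∀ i, 0 < Q i)
    (hM1 : ∀ i, 0 < M1 i) (hM2 : ∀ i, 0 ≤ M2 i) (hM3 : ∀ i, 0 < M3 i)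
    (hM4 : ∀ i, M4 i = -(M2 i + M3 i))
    (a b : ℝ)
    (δ f V P θ f' V' P' θ' : ℝ → Fin n → ℝ)
    (hδ : ∀ t ∈ Set.Ioo a b, ∀ i, HasDerivAt (fun s => δ s i) (f t i) t)
    (hf : ∀ t ∈ Set.Ioo a b, ∀ i, HasDerivAt (fun s => f s i) (f' t i) t)
    (hV : ∀ t ∈ Set.Ioo a b, ∀ i, HasDerivAt (fun s => V s i) (V' t i) t)
    (hP : ∀ t ∈ Set.Ioo a b, ∀ i, HasDerivAt (fun s => P s i) (P' t i) t)
    (hθ : ∀ t ∈ Set.Ioo a b, ∀ i, HasDerivAt (fun s => θ s i) (θ' t i) t)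
    (hfode : ∀ t ∈ Set.Ioo a b, ∀ i, Tp i * f' t i =
      -f t i + Kp i * (P t i - Pd i +
        ∑ j ∈ G.neighborFinset i, V t i * V t j * B i j * Real.sin (δ t i - δ t j)))
    (hVode : ∀ t ∈ Set.Ioo a b, ∀ i, TV i * V' t i =
      Ef i - (1 - (Xd i - Xd' i) * B i i) * V t i -
        (Xd i - Xd' i) * ∑ j ∈ G.neighborFinset i, V t j * B i j * Real.cos (δ t i - δ t j))
    (hPode : ∀ t ∈ Set.Ioo a b, ∀ i, M3 i * Tt i * P' t i =
      -(M2 i + M3 i) * P t i - M4 i * θ t i - M1 i * f t i)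
    (hθode : ∀ t ∈ Set.Ioo a b, ∀ i, Tθ i * θ' t i =
      -θ t i + P t i - (M1 i * Q i / (M2 i + M3 i)) *
        ∑ j ∈ Gc.neighborFinset i, ((Q i * θ t i + R i) - (Q j * θ t j + R j)))
    (δbar Vbar Pbar θbar : Fin n → ℝ)
    (hPbareq : ∀ i, Pbar i = θbar i)
    (hss1 : ∀ i, 0 = Pbar i - Pd i +
      ∑ j ∈ G.neighborFinset i, Vbar i * Vbar j * B i j * Real.sin (δbar i - δbar j))
    (hss2 : ∀ i, 0 = Ef i - (1 - (Xd i - Xd' i) * B i i) * Vbar i -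
      (Xd i - Xd' i) * ∑ j ∈ G.neighborFinset i,
        Vbar j * B i j * Real.cos (δbar i - δbar j))
    (hss3 : ∀ i, ∑ j ∈ Gc.neighborFinset i,
      ((Q i * θbar i + R i) - (Q j * θbar j + R j)) = 0) :
    ∀ t ∈ Set.Ioo a b,
      HasDerivAt
        (fun s => storage1 n G B Xd Xd' Tp Kp δbar (fun _ => 0) Vbar (δ s) (f s) (V s)
          + ((1 / 2) * ∑ i, (M3 i * Tt i / M1 i) * (P s i - Pbar i) ^ 2
            + (1 / 2) * ∑ i, ((M2 i + M3 i) * Tθ i / M1 i) * (θ s i - θbar i) ^ 2))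
        (-∑ i, (f t i) ^ 2 / Kp i
          - ∑ i, (TV i / (Xd i - Xd' i)) * (V' t i) ^ 2
          - ∑ i, ((M2 i + M3 i) / M1 i) * (P t i - θ t i) ^ 2
          - (1 / 2) * ∑ i, ∑ j ∈ Gc.neighborFinset i,
              (Q i * (θ t i - θbar i) - Q j * (θ t j - θbar j)) ^ 2) t ∧
      (-∑ i, (f t i) ^ 2 / Kp i
          - ∑ i, (TV i / (Xd i - Xd' i)) * (V' t i) ^ 2
          - ∑ i, ((M2 i + M3 i) / M1 i) * (P t i - θ t i) ^ 2
          - (1 / 2) * ∑ i, ∑ j ∈ Gc.neighborFinset i,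
              (Q i * (θ t i - θbar i) - Q j * (θ t j - θbar j)) ^ 2) ≤ 0 :=
  stmt11_general n G Gc Xd Xd' hX B hBsym hBzero Tp Kp TV Tt Tθ Q M1 M2 M3 M4 R Ef Pd hKp hTV hM1
    hM2 hM3 hM4 a b δ f V P θ f' V' P' θ' hδ hf hV hP hθ hfode hVode hPode hθode δbar Vbar Pbar θbar
    hPbareq hss1 hss2 hss3
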